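/- arXiv:2505.17314 — 7 statements merged into one kernel-verified Lean document; each statement's English description precedes it below -/
import Mathlib

section
/- Let h ≥ 2 and k > h. In the group G = (Z/hZ)^(C(k,h)), with coordinates indexed by h-element subsets of {1,...,k}, suppose x_1, ..., x_k ∈ G satisfy: for every h-element subset {i_1,...,i_h} of {1,...,k}, either x_{i_1} + ... + x_{i_h} = 0, or x_{i_1} + ... + x_{i_h} = e_S where S = {i_1,...,i_h} and e_S is the standard basis vector for coordinate S. Then in fact x_{i_1} + ... + x_{i_h} = 0 for every h-element subset. -/
open Finset

theorem clique_uses_only_positive_edges (h k : ℕ) (hh : 2 ≤ h) (hk : h < k)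
    (x : Fin k → ({S : Finset (Fin k) // S.card = h} → ZMod h))
    (hx : ∀ S : Finset (Fin k), S.card = h →
      (∑ i ∈ S, x i = 0 ∨
        ∑ i ∈ S, x i = fun T : {S : Finset (Fin k) // S.card = h} =>
          if T.1 = S then (1 : ZMod h) else 0)) :
    ∀ S : Finset (Fin k), S.card = h → ∑ i ∈ S, x i = 0 := by
  haveI : Fact (1 < h) := ⟨hh⟩
  intro S hS
  rcases hx S hS with h0 | h1
  · exact h0
  exfalso
  obtain ⟨j, hj⟩ : ∃ j, j ∉ S := by
    by_contra hc
    push_neg at hc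
    have : S = Finset.univ := Finset.eq_univ_iff_forall.2 hc
    have : S.card = k := by rw [this, Finset.card_univ, Fintype.card_fin]
    omega
  have hsumS : ∑ i ∈ S, x i ⟨S, hS⟩ = 1 := by
    have := congrFun h1 ⟨S, hS⟩
    rw [Finset.sum_apply] at this
    simpa using this
  have key : ∀ i ∈ S, x i ⟨S, hS⟩ = x j ⟨S, hS⟩ + 1 := by
    intro i hi
    set T := insert j (S.erase i) with hT
    have hjS : j ∉ S.erase i := fun hmem => hj (Finset.mem_of_mem_erase hmem)
    have hTcard : T.card = h := by
      rw [hT, Finset.card_insert_of_notMem hjS, Finset.card_erase_of_mem hi, hS]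
      omega
    have hTS : T ≠ S := by
      intro hEq; exact hj (hEq ▸ Finset.mem_insert_self j (S.erase i))
    have hzero : ∑ t ∈ T, x t ⟨S, hS⟩ = 0 := by
      rcases hx T hTcard with h' | h'
      · rw [← Finset.sum_apply, h']; rfl
      · rw [← Finset.sum_apply, h']; simp [Ne.symm hTS]
    rw [hT, Finset.sum_insert hjS] at hzero
    have herase : ∑ t ∈ S.erase i, x t ⟨S, hS⟩ = 1 - x i ⟨S, hS⟩ := by
      have := Finset.sum_erase_add S (fun t => x t ⟨S, hS⟩) hi
      rw [hsumS] at this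
      linear_combination this
    rw [herase] at hzero
    linear_combination -hzero
  have : (1 : ZMod h) = 0 := by
    have hcalc : ∑ i ∈ S, x i ⟨S, hS⟩ = (h : ZMod h) * (x j ⟨S, hS⟩ + 1) := by
      rw [Finset.sum_congr rfl key, Finset.sum_const, hS, nsmul_eq_mul]
    rw [hsumS, ZMod.natCast_self, zero_mul] at hcalc
    exact hcalc
  exact one_ne_zero this
end

section
/- Let h < k, let G be a finite h-uniform hypergraph on vertex set V, and let T be a k-partite h-uniform signed hypergraph with parts T_1, ..., T_k, positive edge set E^+, and negative edge set E^-, such that both (V(T), E^+) and (V(T), E^-) are (h-1, λ)-regular. Then the signed product G' of G and T is (h-1, λ·|V|)-regular, where G' has vertex set V × V(T) and {(u_1,t_1),...,(u_h,t_h)} is an edge of G' iff either ({u_1,...,u_h} ∈ E(G) and {t_1,...,t_h} ∈ E^+) or ({u_1,...,u_h} ∉ E(G) and {t_1,...,t_h} ∈ E^-). -/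
open Finset


/-- `(s, lam)`-regularity of a `k`-partite hypergraph given by the part function `part`
and the edge set `E`: every set of `s` vertices lying in pairwise distinct parts is
contained in exactly `lam` hyperedges. -/
def RegularOn {A : Type*} [DecidableEq A] {k : ℕ} (part : A → Fin k)
    (E : Finset (Finset A)) (s lam : ℕ) : Prop :=
  ∀ S : Finset A, S.card = s → Set.InjOn part ↑S →
    (E.filter (fun e => S ⊆ e)).card = lam

/-- The edge set of the signed product of an `h`-uniform hypergraph with edge set `EG`
and a signed hypergraph with positive edges `Ep` and negative edges `Em`. -/
def ProdEdges {V W : Type*} [Fintype V] [DecidableEq V] [Fintype W] [DecidableEq W]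
    (h : ℕ) (EG : Finset (Finset V)) (Ep Em : Finset (Finset W)) :
    Finset (Finset (V × W)) :=
  (Finset.univ : Finset (Finset (V × W))).filter
    (fun e => e.card = h ∧
      ((e.image Prod.snd ∈ Ep ∧ e.image Prod.fst ∈ EG) ∨
       (e.image Prod.snd ∈ Em ∧ e.image Prod.fst ∉ EG)))


lemma count_extensions {W : Type*} [Fintype W] [DecidableEq W]
    (T : Finset W) (E : Finset (Finset W)) (h : ℕ) (hh : 1 ≤ h)
    (hT : T.card = h - 1) (hE : ∀ e ∈ E, e.card = h) :
    ((univ : Finset W).filter fun w => insert w T ∈ E).card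
      = (E.filter fun e => T ⊆ e).card := by
  apply Finset.card_bij (fun w _ => insert w T)
  · intro w hw
    simp only [mem_filter, mem_univ, true_and] at hw ⊢
    exact ⟨hw, subset_insert _ _⟩
  · intro w hw w' hw' heq
    simp only [mem_filter, mem_univ, true_and] at hw hw'
    have hwT : w ∉ T := by
      intro hmem; have := hE _ hw
      rw [insert_eq_self.mpr hmem] at this; omega
    have : w ∈ insert w' T := heq ▸ mem_insert_self w T
    rcases mem_insert.mp this with h' | h'
    · exact h'
    · exact absurd h' hwT
  · intro e he
    simp only [mem_filter] at he
    obtain ⟨he, hTe⟩ := he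
    have hcard : (e \ T).card = 1 := by
      rw [card_sdiff_of_subset hTe, hE _ he, hT]; omega
    obtain ⟨w, hw⟩ := card_eq_one.mp hcard
    have hwmem : w ∈ e \ T := hw ▸ mem_singleton_self w
    have hwT : w ∉ T := (mem_sdiff.mp hwmem).2
    have hsub : insert w T ⊆ e := insert_subset (mem_sdiff.mp hwmem).1 hTe
    have heq : insert w T = e := by
      apply eq_of_subset_of_card_le hsub
      rw [card_insert_of_notMem hwT, hT, hE _ he]; omega
    exact ⟨w, by simp only [mem_filter, mem_univ, true_and]; rw [heq]; exact he, heq⟩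

theorem signed_product_regular {V W : Type*} [Fintype V] [DecidableEq V]
    [Fintype W] [DecidableEq W]
    (h k lam : ℕ) (hh : 2 ≤ h) (hk : h < k) (part : W → Fin k)
    (EG : Finset (Finset V)) (hEG : ∀ e ∈ EG, e.card = h)
    (Ep Em : Finset (Finset W))
    (hEp : ∀ e ∈ Ep, e.card = h ∧ Set.InjOn part ↑e)
    (hEm : ∀ e ∈ Em, e.card = h ∧ Set.InjOn part ↑e)
    (hregp : RegularOn part Ep (h - 1) lam)
    (hregm : RegularOn part Em (h - 1) lam) :
    RegularOn (fun p : V × W => part p.2) (ProdEdges h EG Ep Em)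
      (h - 1) (lam * Fintype.card V) := by
  intro S hS hinjS
  set T := S.image Prod.snd with hTdef
  set U := S.image Prod.fst with hUdef
  have hsndinj : Set.InjOn Prod.snd ↑S := fun a ha b hb hab =>
    hinjS ha hb (by simp [hab])
  have hT : T.card = h - 1 := by rw [hTdef, card_image_of_injOn hsndinj, hS]
  have hTinj : Set.InjOn part ↑T := by
    intro t ht t' ht' htt
    rw [Finset.mem_coe, hTdef, mem_image] at ht ht'
    obtain ⟨a, ha, rfl⟩ := ht
    obtain ⟨b, hb, rfl⟩ := ht'
    rw [hinjS ha hb htt]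
  set E' := ProdEdges h EG Ep Em with hE'def
  have hE' : ∀ e ∈ E', e.card = h := by
    intro e he
    exact ((mem_filter.mp he).2).1
  have hmain := count_extensions S E' h (by omega) hS hE'
  rw [← hmain]
  have key : ∀ p : V × W, (insert p S ∈ E') ↔
      ((insert p.1 U ∈ EG ∧ insert p.2 T ∈ Ep) ∨
       (insert p.1 U ∉ EG ∧ insert p.2 T ∈ Em)) := by
    intro p
    by_cases hp : p ∈ S
    · have h1 : insert p S = S := insert_eq_self.mpr hp
      have h2 : insert p.2 T = T := insert_eq_self.mpr (mem_image_of_mem _ hp)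
      constructor
      · intro hmem
        have := hE' _ hmem
        rw [h1, hS] at this; omega
      · rintro (⟨_, hEpmem⟩ | ⟨_, hEmmem⟩)
        · rw [h2] at hEpmem; have := (hEp _ hEpmem).1; omega
        · rw [h2] at hEmmem; have := (hEm _ hEmmem).1; omega
    · have hcard : (insert p S).card = h := by
        rw [card_insert_of_notMem hp, hS]; omega
      have hsnd : (insert p S).image Prod.snd = insert p.2 T := by
        rw [image_insert]
      have hfst : (insert p S).image Prod.fst = insert p.1 U := by
        rw [image_insert]
      rw [hE'def, ProdEdges, mem_filter]
      simp only [mem_univ, true_and, hcard, hsnd, hfst]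
      tauto
  set A := (univ : Finset V).filter (fun u => insert u U ∈ EG) with hAdef
  set A' := (univ : Finset V).filter (fun u => insert u U ∉ EG) with hA'def
  set B := (univ : Finset W).filter (fun w => insert w T ∈ Ep) with hBdef
  set B' := (univ : Finset W).filter (fun w => insert w T ∈ Em) with hB'def
  have hPeq : ((univ : Finset (V × W)).filter fun p => insert p S ∈ E')
      = A ×ˢ B ∪ A' ×ˢ B' := by
    ext p
    simp only [mem_filter, mem_univ, true_and, mem_union, mem_product, key,
      hAdef, hA'def, hBdef, hB'def]
  have hdisj : Disjoint (A ×ˢ B) (A' ×ˢ B') := by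
    rw [Finset.disjoint_left]
    intro p hp hp'
    rw [mem_product] at hp hp'
    have h1 := (mem_filter.mp hp.1).2
    have h2 := (mem_filter.mp hp'.1).2
    exact h2 h1
  have hB : B.card = lam := by
    rw [hBdef, count_extensions T Ep h (by omega) hT (fun e he => (hEp e he).1)]
    exact hregp T hT hTinj
  have hB' : B'.card = lam := by
    rw [hB'def, count_extensions T Em h (by omega) hT (fun e he => (hEm e he).1)]
    exact hregm T hT hTinj
  have hAA' : A.card + A'.card = Fintype.card V := by
    rw [hAdef, hA'def]
    exact Finset.card_filter_add_card_filter_not _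
  rw [hPeq, card_union_of_disjoint hdisj, card_product, card_product, hB, hB']
  calc A.card * lam + A'.card * lam = (A.card + A'.card) * lam := by ring
    _ = lam * Fintype.card V := by rw [hAA']; ring
end

section
/- Let h < k, let G be an h-uniform hypergraph, and let T be a template hypergraph for (h,k), with signed product G'. Then vertices (u_1,t_1),...,(u_k,t_k) with t_i in part T_i form a k-clique in G' if and only if {u_1,...,u_k} is a k-clique in G and {t_1,...,t_k} is a k-clique in T. In particular, G' contains a k-clique if and only if G contains a k-clique (since T always contains a k-clique of positive edges). -/
open Finset

theorem signed_product_cliques {V W : Type*} [Fintype V] [DecidableEq V]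
    [Fintype W] [DecidableEq W]
    (h k lam : ℕ) (hh : 2 ≤ h) (hk : h < k) (hlam : 1 ≤ lam) (part : W → Fin k)
    (EG : Finset (Finset V)) (hEG : ∀ e ∈ EG, e.card = h)
    (Ep Em : Finset (Finset W))
    (hEp : ∀ e ∈ Ep, e.card = h ∧ Set.InjOn part ↑e)
    (hEm : ∀ e ∈ Em, e.card = h ∧ Set.InjOn part ↑e)
    -- template property (1): both signed edge sets are (h-1, lam)-regular
    (hregp : RegularOn part Ep (h - 1) lam)
    (hregm : RegularOn part Em (h - 1) lam)
    -- template property (2): a k-clique consisting of positive edges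
    (hposclique : ∃ t : Fin k → W, (∀ i, part (t i) = i) ∧
      ∀ S : Finset (Fin k), S.card = h → S.image t ∈ Ep)
    -- template property (3): no clique of size h+1 contains a negative edge
    (hnoneg : ∀ C : Finset W, C.card = h + 1 → Set.InjOn part ↑C →
      (∀ e ⊆ C, e.card = h → e ∈ Ep ∪ Em) → ∀ e ⊆ C, e.card = h → e ∉ Em) :
    -- cliques in the signed product correspond to pairs of cliques
    (∀ (u : Fin k → V) (t : Fin k → W), (∀ i, part (t i) = i) →
      ((∀ S : Finset (Fin k), S.card = h →
          S.image (fun i => (u i, t i)) ∈ ProdEdges h EG Ep Em) ↔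
        ((∀ S : Finset (Fin k), S.card = h → S.image u ∈ EG) ∧
         (∀ S : Finset (Fin k), S.card = h → S.image t ∈ Ep ∪ Em)))) ∧
    -- in particular: G' contains a k-clique iff G contains a k-clique
    ((∃ (u : Fin k → V) (t : Fin k → W), (∀ i, part (t i) = i) ∧
        ∀ S : Finset (Fin k), S.card = h →
          S.image (fun i => (u i, t i)) ∈ ProdEdges h EG Ep Em) ↔
      ∃ C : Finset V, C.card = k ∧ ∀ e ⊆ C, e.card = h → e ∈ EG) := by

  classical
  -- key lemma: under the all-edges hypothesis, no image can be a negative edge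
  have main : ∀ (t : Fin k → W), (∀ i, part (t i) = i) →
      (∀ S : Finset (Fin k), S.card = h → S.image t ∈ Ep ∪ Em) →
      ∀ S : Finset (Fin k), S.card = h → S.image t ∉ Em := by
    intro t hpart hall S hS hmem
    have hinj : Function.Injective t := by
      intro a b hab
      have := congrArg part hab
      rwa [hpart, hpart] at this
    obtain ⟨S', hSS', hS'⟩ :=
      Finset.exists_superset_card_eq (s := S) (n := h + 1)
        (by omega) (by simpa using hk)
    have hCcard : (S'.image t).card = h + 1 := by
      rw [Finset.card_image_of_injective _ hinj, hS']
    have hCinj : Set.InjOn part ↑(S'.image t) := by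
      intro w1 h1 w2 h2 hpw
      simp only [Finset.coe_image, Set.mem_image, Finset.mem_coe] at h1 h2
      obtain ⟨i, _, rfl⟩ := h1
      obtain ⟨j, _, rfl⟩ := h2
      rw [hpart, hpart] at hpw
      rw [hpw]
    have hCedges : ∀ e ⊆ S'.image t, e.card = h → e ∈ Ep ∪ Em := by
      intro e he hce
      obtain ⟨S'', hS''sub, rfl⟩ := Finset.subset_image_iff.mp he
      exact hall S'' (by rwa [Finset.card_image_of_injective _ hinj] at hce)
    exact hnoneg (S'.image t) hCcard hCinj hCedges (S.image t)
      (Finset.image_subset_image hSS')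
      (by rw [Finset.card_image_of_injective _ hinj, hS]) hmem
  have part1 : ∀ (u : Fin k → V) (t : Fin k → W), (∀ i, part (t i) = i) →
      ((∀ S : Finset (Fin k), S.card = h →
          S.image (fun i => (u i, t i)) ∈ ProdEdges h EG Ep Em) ↔
        ((∀ S : Finset (Fin k), S.card = h → S.image u ∈ EG) ∧
         (∀ S : Finset (Fin k), S.card = h → S.image t ∈ Ep ∪ Em))) := by
    intro u t hpart
    have hinjt : Function.Injective t := by
      intro a b hab
      have := congrArg part hab
      rwa [hpart, hpart] at this
    have hpairinj : Function.Injective (fun i => (u i, t i)) :=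
      fun a b hab => hinjt (congrArg Prod.snd hab)
    have hsnd : ∀ S : Finset (Fin k),
        (S.image (fun i => (u i, t i))).image Prod.snd = S.image t := by
      intro S; rw [Finset.image_image]; rfl
    have hfst : ∀ S : Finset (Fin k),
        (S.image (fun i => (u i, t i))).image Prod.fst = S.image u := by
      intro S; rw [Finset.image_image]; rfl
    constructor
    · intro hcl
      have hmems : ∀ S : Finset (Fin k), S.card = h →
          (S.image t ∈ Ep ∧ S.image u ∈ EG) ∨
          (S.image t ∈ Em ∧ S.image u ∉ EG) := by
        intro S hS
        have := hcl S hS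
        rw [ProdEdges, Finset.mem_filter] at this
        rw [← hsnd S, ← hfst S]
        exact this.2.2
      have hall : ∀ S : Finset (Fin k), S.card = h → S.image t ∈ Ep ∪ Em := by
        intro S hS
        rcases hmems S hS with ⟨h1, _⟩ | ⟨h1, _⟩
        · exact Finset.mem_union_left _ h1
        · exact Finset.mem_union_right _ h1
      refine ⟨fun S hS => ?_, hall⟩
      rcases hmems S hS with ⟨_, h2⟩ | ⟨h1, _⟩
      · exact h2
      · exact absurd h1 (main t hpart hall S hS)
    · rintro ⟨hG, hT⟩ S hS
      have hp : S.image t ∈ Ep := by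
        rcases Finset.mem_union.mp (hT S hS) with h1 | h1
        · exact h1
        · exact absurd h1 (main t hpart hT S hS)
      rw [ProdEdges, Finset.mem_filter]
      refine ⟨Finset.mem_univ _, ?_, Or.inl ⟨?_, ?_⟩⟩
      · rw [Finset.card_image_of_injective _ hpairinj, hS]
      · rw [hsnd S]; exact hp
      · rw [hfst S]; exact hG S hS
  refine ⟨part1, ?_⟩
  constructor
  · rintro ⟨u, t, hpart, hcl⟩
    have hG := ((part1 u t hpart).mp hcl).1
    have hinju : Function.Injective u := by
      intro a b hab
      by_contra hne
      obtain ⟨S, hsub, hScard⟩ :=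
        Finset.exists_superset_card_eq (s := ({a, b} : Finset (Fin k))) (n := h)
          (le_trans (Finset.card_insert_le _ _)
            (by simpa using hh)) (by simpa using hk.le)
      have haS : a ∈ S := hsub (Finset.mem_insert_self _ _)
      have hbS : b ∈ S := hsub (by simp)
      have hsubim : S.image u ⊆ (S.erase b).image u := by
        intro x hx
        obtain ⟨i, hi, rfl⟩ := Finset.mem_image.mp hx
        by_cases hib : i = b
        · subst hib
          exact Finset.mem_image.mpr ⟨a, Finset.mem_erase.mpr ⟨hne, haS⟩, hab⟩
        · exact Finset.mem_image.mpr ⟨i, Finset.mem_erase.mpr ⟨hib, hi⟩, rfl⟩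
      have hcard1 : (S.image u).card = h := hEG _ (hG S hScard)
      have hcard2 : ((S.erase b).image u).card ≤ h - 1 := by
        calc ((S.erase b).image u).card ≤ (S.erase b).card := Finset.card_image_le
          _ = h - 1 := by rw [Finset.card_erase_of_mem hbS, hScard]
      have := le_trans (Finset.card_le_card hsubim) hcard2
      omega
    refine ⟨Finset.univ.image u, ?_, ?_⟩
    · rw [Finset.card_image_of_injective _ hinju, Finset.card_univ, Fintype.card_fin]
    · intro e he hce
      obtain ⟨S, _, rfl⟩ := Finset.subset_image_iff.mp he
      exact hG S (by rwa [Finset.card_image_of_injective _ hinju] at hce)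
  · rintro ⟨C, hC, hCedges⟩
    obtain ⟨t, hpart, hEpAll⟩ := hposclique
    set eqv := C.equivFinOfCardEq hC with heqv
    refine ⟨fun i => (eqv.symm i : V), t, hpart, ?_⟩
    refine (part1 _ t hpart).mpr ⟨fun S hS => ?_, fun S hS =>
      Finset.mem_union_left _ (hEpAll S hS)⟩
    have hinju : Function.Injective (fun i => ((eqv.symm i : C) : V)) := by
      intro a b hab
      exact eqv.symm.injective (Subtype.val_injective hab)
    apply hCedges
    · intro x hx
      obtain ⟨i, _, rfl⟩ := Finset.mem_image.mp hx
      exact (eqv.symm i).2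
    · rw [Finset.card_image_of_injective _ hinju, hS]
end

section
/- Let h < k and let G' be the signed product of an h-uniform hypergraph G and a template hypergraph T(h,k). Then the number of k-cliques in G' (with one vertex per part) equals k! times the number of k-cliques in G times the number of k-cliques in T(h,k). -/
open Finset

/-- Pull back a subset of an injective image. -/
lemma exists_preimage_finset {α β : Type*} [DecidableEq α] [DecidableEq β] {g : α → β}
    (hg : Function.Injective g) {s : Finset α} {e : Finset β} (he : e ⊆ s.image g) :
    ∃ R ⊆ s, R.image g = e ∧ R.card = e.card := by
  classical
  refine ⟨s.filter (fun i => g i ∈ e), filter_subset _ _, ?_, ?_⟩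
  · ext x
    simp only [mem_image, mem_filter]
    constructor
    · rintro ⟨i, ⟨-, hi⟩, rfl⟩; exact hi
    · intro hx
      obtain ⟨i, hi, rfl⟩ := mem_image.1 (he hx)
      exact ⟨i, ⟨hi, hx⟩, rfl⟩
  · have h1 := Finset.card_image_of_injective (s.filter (fun i => g i ∈ e)) hg
    rw [← h1]
    congr 1
    ext x
    simp only [mem_image, mem_filter]
    constructor
    · rintro ⟨i, ⟨-, hi⟩, rfl⟩; exact hi
    · intro hx
      obtain ⟨i, hi, rfl⟩ := mem_image.1 (he hx)
      exact ⟨i, ⟨hi, hx⟩, rfl⟩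

/-- In a template with no negative HJ configuration, every edge of a transversal
clique in `Ep ∪ Em` is in fact a positive edge. -/
lemma template_pos {W : Type*} [DecidableEq W] {h k : ℕ} (hk : h < k) (part : W → Fin k)
    (Ep Em : Finset (Finset W))
    (hnoneg : ∀ C : Finset W, C.card = h + 1 → Set.InjOn part ↑C →
      (∀ e ⊆ C, e.card = h → e ∈ Ep ∪ Em) → ∀ e ⊆ C, e.card = h → e ∉ Em)
    {t : Fin k → W} (hpt : ∀ i, part (t i) = i)
    (ht : ∀ S : Finset (Fin k), S.card = h → S.image t ∈ Ep ∪ Em) :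
    ∀ S : Finset (Fin k), S.card = h → S.image t ∈ Ep ∧ S.image t ∉ Em := by
  have hinj : Function.Injective t := fun i j hij => by
    rw [← hpt i, ← hpt j, hij]
  intro S hS
  obtain ⟨S', hSS', -, hS'⟩ := exists_subsuperset_card_eq (n := h + 1) (subset_univ S)
    (by rw [hS]; exact Nat.le_succ h) (by simpa using hk)
  have hC : (S'.image t).card = h + 1 := by
    rw [Finset.card_image_of_injective _ hinj, hS']
  have hCinj : Set.InjOn part ↑(S'.image t) := by
    intro x hx y hy hxy
    simp only [coe_image, Set.mem_image, mem_coe] at hx hy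
    obtain ⟨i, -, rfl⟩ := hx
    obtain ⟨j, -, rfl⟩ := hy
    rw [hpt i, hpt j] at hxy
    exact congrArg t hxy
  have hall : ∀ e ⊆ S'.image t, e.card = h → e ∈ Ep ∪ Em := by
    intro e hes he
    obtain ⟨R, -, hRe, hRcard⟩ := exists_preimage_finset hinj hes
    rw [← hRe]
    exact ht R (hRcard.trans he)
  have hnot := hnoneg (S'.image t) hC hCinj hall (S.image t)
    (image_subset_image hSS')
    (by rw [Finset.card_image_of_injective _ hinj, hS])
  exact ⟨(mem_union.1 (ht S hS)).resolve_right hnot, hnot⟩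

/-- The number of injections of `Fin k` with a prescribed image `C` of size `k`. -/
lemma card_injections_with_image {V : Type*} [Fintype V] [DecidableEq V] {k : ℕ}
    (C : Finset V) (hC : C.card = k) :
    Nat.card {f : Fin k → V // Function.Injective f ∧ Finset.univ.image f = C} =
      k.factorial := by
  have hcard : Fintype.card {x // x ∈ C} = Fintype.card (Fin k) := by
    simp [hC]
  have e : {f : Fin k → V // Function.Injective f ∧ Finset.univ.image f = C} ≃
      (Fin k ≃ {x // x ∈ C}) :=
    { toFun := fun f => Equiv.ofBijective
        (fun i => ⟨f.1 i, by
          have := mem_image_of_mem f.1 (mem_univ i); rwa [f.2.2] at this⟩)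
        ((Fintype.bijective_iff_injective_and_card _).2
          ⟨fun i j hij => f.2.1 (congrArg Subtype.val hij), hcard.symm⟩)
      invFun := fun e => ⟨fun i => (e i : V),
        fun i j hij => e.injective (Subtype.ext hij), by
          ext x
          simp only [mem_image, mem_univ, true_and]
          constructor
          · rintro ⟨i, rfl⟩; exact (e i).2
          · intro hx; exact ⟨e.symm ⟨x, hx⟩, by simp⟩⟩
      left_inv := fun f => Subtype.ext rfl
      right_inv := fun e => Equiv.ext fun i => Subtype.ext rfl }
  rw [Nat.card_congr e, Nat.card_eq_fintype_card,
    Fintype.card_equiv (Fintype.equivFinOfCardEq (by simp [hC])).symm]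
  simp

/-- Counting injective clique maps: `k!` times the number of clique sets. -/
lemma card_clique_maps {V : Type*} [Fintype V] [DecidableEq V] {h k : ℕ}
    (EG : Finset (Finset V)) :
    Nat.card {f : Fin k → V // Function.Injective f ∧
        ∀ S : Finset (Fin k), S.card = h → S.image f ∈ EG} =
      k.factorial *
        Nat.card {C : Finset V // C.card = k ∧ ∀ e ⊆ C, e.card = h → e ∈ EG} := by
  classical
  set GC := {C : Finset V // C.card = k ∧ ∀ e ⊆ C, e.card = h → e ∈ EG} with hGC
  set FC := {f : Fin k → V // Function.Injective f ∧
      ∀ S : Finset (Fin k), S.card = h → S.image f ∈ EG} with hFC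
  let g : FC → GC := fun f => ⟨Finset.univ.image f.1, by
    constructor
    · rw [Finset.card_image_of_injective _ f.2.1, card_univ, Fintype.card_fin]
    · intro e hes he
      obtain ⟨R, -, hRe, hRcard⟩ := exists_preimage_finset f.2.1 hes
      rw [← hRe]
      exact f.2.2 R (hRcard.trans he)⟩
  have e1 : (Σ C : GC, {x : FC // g x = C}) ≃ FC := Equiv.sigmaFiberEquiv g
  have efib : ∀ C : GC, {x : FC // g x = C} ≃
      {f : Fin k → V // Function.Injective f ∧ Finset.univ.image f = C.1} := by
    intro C
    refine ⟨fun x => ⟨x.1.1, x.1.2.1, congrArg Subtype.val x.2⟩,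
      fun f => ⟨⟨f.1, f.2.1, ?_⟩, Subtype.ext f.2.2⟩,
      fun x => Subtype.ext (Subtype.ext rfl), fun f => Subtype.ext rfl⟩
    intro S hS
    refine C.2.2 (S.image f.1) ?_ ?_
    · have h2 : S.image f.1 ⊆ Finset.univ.image f.1 :=
        image_subset_image (subset_univ S)
      rwa [f.2.2] at h2
    · rw [Finset.card_image_of_injective _ f.2.1, hS]
  rw [← Nat.card_congr e1, Nat.card_eq_fintype_card, Fintype.card_sigma]
  have hsum : ∀ C : GC, Fintype.card {x : FC // g x = C} = k.factorial := by
    intro C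
    rw [← Nat.card_eq_fintype_card, Nat.card_congr (efib C),
      card_injections_with_image C.1 C.2.1]
  rw [Finset.sum_congr rfl (fun C _ => hsum C), Finset.sum_const, smul_eq_mul,
    card_univ, mul_comm, Nat.card_eq_fintype_card]

theorem signed_product_clique_count {V W : Type*} [Fintype V] [DecidableEq V]
    [Fintype W] [DecidableEq W]
    (h k lam : ℕ) (hh : 2 ≤ h) (hk : h < k) (hlam : 1 ≤ lam) (part : W → Fin k)
    (EG : Finset (Finset V)) (hEG : ∀ e ∈ EG, e.card = h)
    (Ep Em : Finset (Finset W))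
    (hEp : ∀ e ∈ Ep, e.card = h ∧ Set.InjOn part ↑e)
    (hEm : ∀ e ∈ Em, e.card = h ∧ Set.InjOn part ↑e)
    (hregp : RegularOn part Ep (h - 1) lam)
    (hregm : RegularOn part Em (h - 1) lam)
    (hposclique : ∃ t : Fin k → W, (∀ i, part (t i) = i) ∧
      ∀ S : Finset (Fin k), S.card = h → S.image t ∈ Ep)
    (hnoneg : ∀ C : Finset W, C.card = h + 1 → Set.InjOn part ↑C →
      (∀ e ⊆ C, e.card = h → e ∈ Ep ∪ Em) → ∀ e ⊆ C, e.card = h → e ∉ Em) :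
    Nat.card {c : Fin k → V × W // (∀ i, part (c i).2 = i) ∧
        ∀ S : Finset (Fin k), S.card = h → S.image c ∈ ProdEdges h EG Ep Em} =
      k.factorial *
        Nat.card {C : Finset V // C.card = k ∧ ∀ e ⊆ C, e.card = h → e ∈ EG} *
        Nat.card {t : Fin k → W // (∀ i, part (t i) = i) ∧
          ∀ S : Finset (Fin k), S.card = h → S.image t ∈ Ep ∪ Em} := by
  classical
  -- forward analysis of a product clique
  have fwd : ∀ c : Fin k → V × W, (∀ i, part (c i).2 = i) →
      (∀ S : Finset (Fin k), S.card = h → S.image c ∈ ProdEdges h EG Ep Em) →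
      (Function.Injective (fun i => (c i).1) ∧
        (∀ S : Finset (Fin k), S.card = h → S.image (fun i => (c i).1) ∈ EG)) ∧
      (∀ S : Finset (Fin k), S.card = h → S.image (fun i => (c i).2) ∈ Ep ∪ Em) := by
    intro c hcp hcc
    have ht2 : ∀ S : Finset (Fin k), S.card = h →
        S.image (fun i => (c i).2) ∈ Ep ∪ Em := by
      intro S hS
      have hm := hcc S hS
      simp only [ProdEdges, mem_filter, mem_univ, true_and] at hm
      rw [Finset.image_image] at hm
      rcases hm.2 with ⟨hsnd, -⟩ | ⟨hsnd, -⟩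
      · exact mem_union_left _ hsnd
      · exact mem_union_right _ hsnd
    have hkey := template_pos hk part Ep Em hnoneg
      (t := fun i => (c i).2) hcp ht2
    have hedges : ∀ S : Finset (Fin k), S.card = h →
        S.image (fun i => (c i).1) ∈ EG := by
      intro S hS
      have hm := hcc S hS
      simp only [ProdEdges, mem_filter, mem_univ, true_and] at hm
      rw [Finset.image_image, Finset.image_image] at hm
      rcases hm.2 with ⟨-, hfst⟩ | ⟨hsnd, -⟩
      · exact hfst
      · exact absurd hsnd (hkey S hS).2
    refine ⟨⟨?_, hedges⟩, ht2⟩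
    intro i j hij
    by_contra hne
    obtain ⟨S, hsub, -, hScard⟩ := exists_subsuperset_card_eq
      (subset_univ ({i, j} : Finset (Fin k)))
      (le_trans (Finset.card_insert_le _ _) (by simpa using hh))
      (by simpa using hk.le)
    have hi : i ∈ S := hsub (by simp)
    have hj : j ∈ S := hsub (by simp)
    have hcardim := hEG _ (hedges S hScard)
    have hinjOn : Set.InjOn (fun i => (c i).1) ↑S :=
      Finset.card_image_iff.mp (by rw [hcardim, hScard])
    exact hne (hinjOn (mem_coe.2 hi) (mem_coe.2 hj) hij)
  -- backward construction
  have bwd : ∀ (f : Fin k → V) (t : Fin k → W), Function.Injective f →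
      (∀ S : Finset (Fin k), S.card = h → S.image f ∈ EG) →
      (∀ i, part (t i) = i) →
      (∀ S : Finset (Fin k), S.card = h → S.image t ∈ Ep ∪ Em) →
      (∀ i, part ((fun i => (f i, t i)) i).2 = i) ∧
        ∀ S : Finset (Fin k), S.card = h →
          S.image (fun i => (f i, t i)) ∈ ProdEdges h EG Ep Em := by
    intro f t hf hfE hpt ht
    refine ⟨hpt, ?_⟩
    intro S hS
    have htinj : Function.Injective t := fun i j hij => by
      rw [← hpt i, ← hpt j, hij]
    have hcinj : Function.Injective (fun i => (f i, t i)) :=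
      fun i j hij => htinj (congrArg Prod.snd hij)
    simp only [ProdEdges, mem_filter, mem_univ, true_and]
    refine ⟨by rw [Finset.card_image_of_injective _ hcinj, hS], Or.inl ⟨?_, ?_⟩⟩
    · rw [Finset.image_image]
      exact (template_pos hk part Ep Em hnoneg hpt ht S hS).1
    · rw [Finset.image_image]
      exact hfE S hS
  -- the main bijection
  have e : {c : Fin k → V × W // (∀ i, part (c i).2 = i) ∧
      ∀ S : Finset (Fin k), S.card = h → S.image c ∈ ProdEdges h EG Ep Em} ≃
      {f : Fin k → V // Function.Injective f ∧
        ∀ S : Finset (Fin k), S.card = h → S.image f ∈ EG} ×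
      {t : Fin k → W // (∀ i, part (t i) = i) ∧
        ∀ S : Finset (Fin k), S.card = h → S.image t ∈ Ep ∪ Em} :=
    { toFun := fun c => (⟨fun i => (c.1 i).1, (fwd c.1 c.2.1 c.2.2).1⟩,
        ⟨fun i => (c.1 i).2, c.2.1, (fwd c.1 c.2.1 c.2.2).2⟩)
      invFun := fun p => ⟨fun i => (p.1.1 i, p.2.1 i),
        bwd p.1.1 p.2.1 p.1.2.1 p.1.2.2 p.2.2.1 p.2.2.2⟩
      left_inv := fun c => Subtype.ext rfl
      right_inv := fun p => rfl }
  rw [Nat.card_congr e, Nat.card_prod, card_clique_maps]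
end

section
/- For any constants h < k, there exists a k-partite h-uniform signed hypergraph T with parts T_1,...,T_k each of size h^(C(k,h)) satisfying: (1) both the positive-edge hypergraph and the negative-edge hypergraph are (h-1, k-h+1)-regular; (2) the positive-edge hypergraph contains a k-clique; (3) no clique of size h+1 contains a negative edge. In particular, template hypergraphs exist for all h < k. -/
open Finset

/-- Vertex type of the template hypergraph: `k` parts, each a copy of the group
`(ZMod h)^(C(k,h))` with coordinates indexed by `h`-element subsets of `Fin k`. -/
abbrev TVert (h k : ℕ) : Type :=
  Fin k × ({S : Finset (Fin k) // S.card = h} → ZMod h)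



namespace TemplateAux

variable {h k : ℕ} [NeZero h]

abbrev Idx (h k : ℕ) := {S : Finset (Fin k) // S.card = h}

/-- edges with prescribed sum depending on the part-set -/
def Edges (h k : ℕ) [NeZero h] (P : Finset (Fin k) → Idx h k → ZMod h) :
    Finset (Finset (TVert h k)) :=
  univ.filter (fun e => e.card = h ∧ (e.image Prod.fst).card = h ∧
    ∑ w ∈ e, w.2 = P (e.image Prod.fst))

lemma mem_Edges {P} {e : Finset (TVert h k)} :
    e ∈ Edges h k P ↔ e.card = h ∧ (e.image Prod.fst).card = h ∧
      ∑ w ∈ e, w.2 = P (e.image Prod.fst) := by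
  simp [Edges]

lemma edges_uniform {P} : ∀ e ∈ Edges h k P,
    e.card = h ∧ Set.InjOn (Prod.fst : TVert h k → Fin k) ↑e := by
  intro e he
  rw [mem_Edges] at he
  exact ⟨he.1, Finset.card_image_iff.mp (he.2.1.trans he.1.symm)⟩

lemma edges_regular (hh : 1 ≤ h) (hk : h < k) (P : Finset (Fin k) → Idx h k → ZMod h) :
    RegularOn (Prod.fst : TVert h k → Fin k) (Edges h k P) (h - 1) (k - h + 1) := by
  intro S hScard hSinj
  have hIm : (S.image Prod.fst).card = h - 1 :=
    (Finset.card_image_iff.mpr hSinj).trans hScard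
  have key : ((univ : Finset (Fin k)) \ S.image Prod.fst).card =
      ((Edges h k P).filter (fun e => S ⊆ e)).card := by
    apply Finset.card_bij
      (fun i _ => insert (i, P (insert i (S.image Prod.fst)) - ∑ w ∈ S, w.2) S)
    · intro i hi
      simp only [mem_sdiff, mem_univ, true_and] at hi
      set x : TVert h k := (i, P (insert i (S.image Prod.fst)) - ∑ w ∈ S, w.2) with hx
      have hxS : x ∉ S := fun hxS => hi (Finset.mem_image_of_mem Prod.fst hxS)
      have him : (insert x S).image Prod.fst = insert i (S.image Prod.fst) := by
        rw [Finset.image_insert]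
      rw [mem_filter, mem_Edges]
      refine ⟨⟨?_, ?_, ?_⟩, Finset.subset_insert _ _⟩
      · rw [Finset.card_insert_of_notMem hxS, hScard]; omega
      · rw [him, Finset.card_insert_of_notMem hi, hIm]; omega
      · rw [Finset.sum_insert hxS, him, hx]
        simp
    · intro i hi j hj hij
      have : ((i, P (insert i (S.image Prod.fst)) - ∑ w ∈ S, w.2) : TVert h k)
          ∈ insert ((j, P (insert j (S.image Prod.fst)) - ∑ w ∈ S, w.2) : TVert h k) S := by
        rw [← hij]; exact Finset.mem_insert_self _ _
      simp only [mem_sdiff, mem_univ, true_and] at hi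
      rcases Finset.mem_insert.mp this with h1 | h1
      · exact congrArg Prod.fst h1
      · exact absurd (Finset.mem_image_of_mem Prod.fst h1) hi
    · intro e he
      rw [mem_filter, mem_Edges] at he
      obtain ⟨⟨hcard, himc, hsum⟩, hSe⟩ := he
      have hd : (e \ S).card = 1 := by
        rw [Finset.card_sdiff_of_subset hSe, hcard, hScard]; omega
      obtain ⟨x, hxx⟩ := Finset.card_eq_one.mp hd
      have hxe : x ∈ e := (Finset.mem_sdiff.mp (hxx ▸ Finset.mem_singleton_self x)).1
      have hxS : x ∉ S := (Finset.mem_sdiff.mp (hxx ▸ Finset.mem_singleton_self x)).2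
      have heq : e = insert x S := by
        refine (Finset.eq_of_subset_of_card_le ?_ ?_).symm
        · intro a ha
          rcases Finset.mem_insert.mp ha with rfl | haS
          · exact hxe
          · exact hSe haS
        · rw [Finset.card_insert_of_notMem hxS, hScard, hcard]; omega
      have hiIm : x.1 ∉ S.image Prod.fst := by
        intro hmem
        have : e.image Prod.fst = S.image Prod.fst := by
          rw [heq, Finset.image_insert, Finset.insert_eq_self.mpr hmem]
        rw [this, hIm] at himc; omega
      refine ⟨x.1, by simp [hiIm], ?_⟩
      have him : e.image Prod.fst = insert x.1 (S.image Prod.fst) := by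
        rw [heq, Finset.image_insert]
      have hx2 : x.2 = P (insert x.1 (S.image Prod.fst)) - ∑ w ∈ S, w.2 := by
        rw [heq, Finset.sum_insert hxS, Finset.image_insert] at hsum
        linear_combination (norm := abel) hsum
      rw [heq]
      congr 1
      exact Prod.ext rfl hx2.symm
  rw [← key, Finset.card_sdiff_of_subset (Finset.subset_univ _), Finset.card_univ,
    Fintype.card_fin, hIm]
  omega

end TemplateAux

namespace TemplateAux

/-- evaluating a sum of vectors at a coordinate -/
lemma bvec_def : True := trivial

theorem main (h k : ℕ) [NeZero h] (hh : 2 ≤ h) (hk : h < k) :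
    ∃ Ep Em : Finset (Finset (TVert h k)),
      (∀ i : Fin k,
        ((Finset.univ : Finset (TVert h k)).filter (fun w => w.1 = i)).card =
          h ^ Nat.choose k h) ∧
      (∀ e ∈ Ep, e.card = h ∧ Set.InjOn (Prod.fst : TVert h k → Fin k) ↑e) ∧
      (∀ e ∈ Em, e.card = h ∧ Set.InjOn (Prod.fst : TVert h k → Fin k) ↑e) ∧
      RegularOn (Prod.fst : TVert h k → Fin k) Ep (h - 1) (k - h + 1) ∧
      RegularOn (Prod.fst : TVert h k → Fin k) Em (h - 1) (k - h + 1) ∧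
      (∃ t : Fin k → TVert h k, (∀ i, (t i).1 = i) ∧
        ∀ S : Finset (Fin k), S.card = h → S.image t ∈ Ep) ∧
      (∀ C : Finset (TVert h k), C.card = h + 1 → Set.InjOn (Prod.fst : TVert h k → Fin k) ↑C →
        (∀ e ⊆ C, e.card = h → e ∈ Ep ∪ Em) →
          ∀ e ⊆ C, e.card = h → e ∉ Em) := by
  haveI : Fact (1 < h) := ⟨hh⟩
  set bv : Finset (Fin k) → Idx h k → ZMod h :=
    fun Q T => if (T : Finset (Fin k)) = Q then 1 else 0 with hbv
  refine ⟨Edges h k (fun _ => 0), Edges h k bv, ?_, edges_uniform, edges_uniform,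
    edges_regular (by omega) hk _, edges_regular (by omega) hk _, ?_, ?_⟩
  · -- part sizes
    intro i
    have : (univ.filter (fun w : TVert h k => w.1 = i)) =
        univ.image (fun v : Idx h k → ZMod h => (i, v)) := by
      ext ⟨a, b⟩
      simp only [mem_filter, mem_univ, true_and, Finset.mem_image]
      constructor
      · rintro rfl; exact ⟨b, rfl⟩
      · rintro ⟨v, hv⟩; exact (congrArg Prod.fst hv).symm
    rw [this, Finset.card_image_of_injective _ (fun a b hab => congrArg Prod.snd hab),
      Finset.card_univ, Fintype.card_fun, ZMod.card, Fintype.card_finset_len,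
      Fintype.card_fin]
  · -- clique
    refine ⟨fun i => (i, 0), fun i => rfl, ?_⟩
    intro S hS
    have hinj : Set.InjOn (fun i => ((i, 0) : TVert h k)) ↑S := by
      intro a _ b _ hab; exact congrArg Prod.fst hab
    have hcard : (S.image fun i => ((i, 0) : TVert h k)).card = h :=
      (Finset.card_image_iff.mpr hinj).trans hS
    rw [mem_Edges]
    refine ⟨hcard, ?_, ?_⟩
    · have : (S.image fun i => ((i, 0) : TVert h k)).image Prod.fst = S := by
        ext a; simp
      rw [this, hS]
    · rw [Finset.sum_image (fun a ha b hb hab => hinj ha hb hab)]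
      simp
  · -- no negative edge in a clique
    intro C hC hCinj hedges e heC hecard hem
    -- identify e = C.erase w0
    have hd : (C \ e).card = 1 := by
      rw [Finset.card_sdiff_of_subset heC, hC, hecard]; omega
    obtain ⟨w0, hw0⟩ := Finset.card_eq_one.mp hd
    have hw0C : w0 ∈ C := (Finset.mem_sdiff.mp (hw0 ▸ Finset.mem_singleton_self w0)).1
    have hw0e : w0 ∉ e := (Finset.mem_sdiff.mp (hw0 ▸ Finset.mem_singleton_self w0)).2
    have hCe : (C.erase w0).card = h := by rw [Finset.card_erase_of_mem hw0C, hC]; omega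
    have heq : e = C.erase w0 := by
      apply Finset.eq_of_subset_of_card_le
      · intro a ha
        exact Finset.mem_erase.mpr ⟨fun hz => hw0e (hz ▸ ha), heC ha⟩
      · rw [hCe, hecard]
    -- the coordinate T0
    have hT0card : ((C.erase w0).image Prod.fst).card = h := by
      refine (Finset.card_image_iff.mpr ?_).trans hCe
      exact hCinj.mono (by exact_mod_cast Finset.erase_subset _ _)
    set T0 : Idx h k := ⟨(C.erase w0).image Prod.fst, hT0card⟩ with hT0
    -- each complement has sum 0 or bvec
    have key : ∀ w ∈ C, (∑ v ∈ C.erase w, v.2) = 0 ∨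
        (∑ v ∈ C.erase w, v.2) = bv ((C.erase w).image Prod.fst) := by
      intro w hw
      have hsub : C.erase w ⊆ C := Finset.erase_subset _ _
      have hcard' : (C.erase w).card = h := by rw [Finset.card_erase_of_mem hw, hC]; omega
      rcases Finset.mem_union.mp (hedges _ hsub hcard') with hp | hm
      · exact Or.inl (mem_Edges.mp hp).2.2
      · exact Or.inr (mem_Edges.mp hm).2.2
    -- total sum vanishes
    have hsmul : ∀ x : Idx h k → ZMod h, h • x = 0 := by
      intro x; funext T
      rw [Pi.smul_apply, nsmul_eq_mul, ZMod.natCast_self, zero_mul, Pi.zero_apply]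
    have total : ∑ w ∈ C, (∑ v ∈ C.erase w, v.2) = 0 := by
      have : ∀ w ∈ C, (∑ v ∈ C.erase w, v.2) = (∑ v ∈ C, v.2) - w.2 := by
        intro w hw; rw [Finset.sum_erase_eq_sub hw]
      rw [Finset.sum_congr rfl this, Finset.sum_sub_distrib, Finset.sum_const, hC,
        succ_nsmul, hsmul, zero_add, sub_self]
    -- evaluate at T0
    have total0 : ∑ w ∈ C, (∑ v ∈ C.erase w, v.2) T0 = 0 := by
      have := congrFun total T0
      rw [Finset.sum_apply] at this
      exact this
    have split : (∑ v ∈ C.erase w0, v.2) T0 +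
        ∑ w ∈ C.erase w0, (∑ v ∈ C.erase w, v.2) T0 = 0 :=
      (Finset.add_sum_erase C (fun w => (∑ v ∈ C.erase w, v.2) T0) hw0C).trans total0
    have hzero : ∀ w ∈ C.erase w0, (∑ v ∈ C.erase w, v.2) T0 = 0 := by
      intro w hw
      obtain ⟨hne, hwC⟩ := Finset.mem_erase.mp hw
      rcases key w hwC with h0 | hb
      · rw [h0]; rfl
      · rw [hb, hbv]
        simp only
        rw [if_neg]
        intro habs
        have h1 : w0.1 ∈ (C.erase w).image Prod.fst :=
          Finset.mem_image_of_mem _ (Finset.mem_erase.mpr ⟨fun hz => hne (congrArg id hz).symm, hw0C⟩)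
        rw [← habs] at h1
        obtain ⟨v, hv, hv1⟩ := Finset.mem_image.mp h1
        obtain ⟨hvne, hvC⟩ := Finset.mem_erase.mp hv
        exact hvne (hCinj hvC hw0C hv1)
    have hmain : (∑ v ∈ C.erase w0, v.2) T0 = 0 := by
      rw [Finset.sum_eq_zero hzero, add_zero] at split
      exact split
    -- but the negative edge gives value 1
    rw [heq, mem_Edges] at hem
    have h2 := congrFun hem.2.2 T0
    rw [hmain, hbv] at h2
    beta_reduce at h2
    rw [if_pos rfl] at h2
    exact one_ne_zero h2.symm

end TemplateAux

theorem template_hypergraph_exists (h k : ℕ) [NeZero h] (hh : 2 ≤ h) (hk : h < k) :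
    ∃ Ep Em : Finset (Finset (TVert h k)),
      -- each part has exactly h^(C(k,h)) vertices
      (∀ i : Fin k,
        ((Finset.univ : Finset (TVert h k)).filter (fun w => w.1 = i)).card =
          h ^ Nat.choose k h) ∧
      -- edges are h-uniform with vertices in pairwise distinct parts
      (∀ e ∈ Ep, e.card = h ∧ Set.InjOn (Prod.fst : TVert h k → Fin k) ↑e) ∧
      (∀ e ∈ Em, e.card = h ∧ Set.InjOn (Prod.fst : TVert h k → Fin k) ↑e) ∧
      -- (1) both signed edge sets are (h-1, k-h+1)-regular
      RegularOn (Prod.fst : TVert h k → Fin k) Ep (h - 1) (k - h + 1) ∧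
      RegularOn (Prod.fst : TVert h k → Fin k) Em (h - 1) (k - h + 1) ∧
      -- (2) the positive hypergraph contains a k-clique
      (∃ t : Fin k → TVert h k, (∀ i, (t i).1 = i) ∧
        ∀ S : Finset (Fin k), S.card = h → S.image t ∈ Ep) ∧
      -- (3) no clique of size h+1 contains a negative edge
      (∀ C : Finset (TVert h k), C.card = h + 1 → Set.InjOn (Prod.fst : TVert h k → Fin k) ↑C →
        (∀ e ⊆ C, e.card = h → e ∈ Ep ∪ Em) →
          ∀ e ⊆ C, e.card = h → e ∉ Em) := by
  exact TemplateAux.main h k hh hk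
end

section
/- Let T(h,k) be the template hypergraph constructed over G = (Z/hZ)^(C(k,h)). Then for any (h-1) vertices taken from h-1 pairwise distinct parts, and any further part not among these h-1 parts, there is exactly one vertex in that part forming a positive edge with them, and exactly one forming a negative edge; hence each such (h-1)-tuple lies in exactly k-h+1 positive edges and exactly k-h+1 negative edges. -/
open Finset

/-- Positive edges of the template hypergraph: `h` vertices in pairwise distinct
parts whose group elements sum to `0`. -/
def posEdges (h k : ℕ) [NeZero h] : Finset (Finset (TVert h k)) :=
  (Finset.univ : Finset (Finset (TVert h k))).filter
    (fun e => e.card = h ∧ (e.image Prod.fst).card = h ∧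
      ∑ w ∈ e, w.2 = 0)

/-- Negative edges of the template hypergraph: `h` vertices in pairwise distinct
parts, with part set `S`, whose group elements sum to the standard basis vector `e_S`. -/
def negEdges (h k : ℕ) [NeZero h] : Finset (Finset (TVert h k)) :=
  (Finset.univ : Finset (Finset (TVert h k))).filter
    (fun e => e.card = h ∧ (e.image Prod.fst).card = h ∧
      ∑ w ∈ e, w.2 = fun T : {S : Finset (Fin k) // S.card = h} =>
        if T.1 = e.image Prod.fst then (1 : ZMod h) else 0)

section Aux

variable {h k : ℕ} [NeZero h]

omit [NeZero h] in
lemma tv_basic (hh : 2 ≤ h) (A : Finset (TVert h k)) (hA : A.card = h - 1)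
    (hAparts : Set.InjOn (Prod.fst : TVert h k → Fin k) ↑A)
    (j : Fin k) (hj : j ∉ A.image Prod.fst)
    (g : {S : Finset (Fin k) // S.card = h} → ZMod h) :
    ((j, g) : TVert h k) ∉ A ∧
    (insert ((j, g) : TVert h k) A).card = h ∧
    (insert ((j, g) : TVert h k) A).image Prod.fst = insert j (A.image Prod.fst) ∧
    ((insert ((j, g) : TVert h k) A).image Prod.fst).card = h ∧
    ∑ w ∈ insert ((j, g) : TVert h k) A, w.2 = g + ∑ w ∈ A, w.2 := by
  have hnm : ((j, g) : TVert h k) ∉ A := fun hm => hj (Finset.mem_image_of_mem _ hm)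
  have himg : (A.image Prod.fst).card = h - 1 := by
    rw [Finset.card_image_of_injOn hAparts, hA]
  refine ⟨hnm, ?_, ?_, ?_, ?_⟩
  · rw [Finset.card_insert_of_notMem hnm, hA]; omega
  · simp [Finset.image_insert]
  · rw [Finset.image_insert, Finset.card_insert_of_notMem hj, himg]; omega
  · rw [Finset.sum_insert hnm]

lemma tv_mem_pos (hh : 2 ≤ h) (A : Finset (TVert h k)) (hA : A.card = h - 1)
    (hAparts : Set.InjOn (Prod.fst : TVert h k → Fin k) ↑A)
    (j : Fin k) (hj : j ∉ A.image Prod.fst)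
    (g : {S : Finset (Fin k) // S.card = h} → ZMod h) :
    insert ((j, g) : TVert h k) A ∈ posEdges h k ↔ g = -∑ w ∈ A, w.2 := by
  obtain ⟨h0, h1, h2, h3, h4⟩ := tv_basic hh A hA hAparts j hj g
  simp only [posEdges, Finset.mem_filter, Finset.mem_univ, true_and, h1, h3, h4,
    add_eq_zero_iff_eq_neg, and_iff_right rfl]

lemma tv_mem_neg (hh : 2 ≤ h) (A : Finset (TVert h k)) (hA : A.card = h - 1)
    (hAparts : Set.InjOn (Prod.fst : TVert h k → Fin k) ↑A)
    (j : Fin k) (hj : j ∉ A.image Prod.fst)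
    (g : {S : Finset (Fin k) // S.card = h} → ZMod h) :
    insert ((j, g) : TVert h k) A ∈ negEdges h k ↔
      g = (fun T : {S : Finset (Fin k) // S.card = h} =>
        if T.1 = insert j (A.image Prod.fst) then (1 : ZMod h) else 0) - ∑ w ∈ A, w.2 := by
  obtain ⟨h0, h1, h2, h3, h4⟩ := tv_basic hh A hA hAparts j hj g
  have h3' : (insert j (A.image Prod.fst)).card = h := h2 ▸ h3
  simp only [negEdges, Finset.mem_filter, Finset.mem_univ, true_and, h1, h2, h3', h4,
    and_iff_right rfl, eq_sub_iff_add_eq]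

lemma tv_decomp (hh : 2 ≤ h) (A : Finset (TVert h k)) (hA : A.card = h - 1)
    (hAparts : Set.InjOn (Prod.fst : TVert h k → Fin k) ↑A)
    (e : Finset (TVert h k)) (hsub : A ⊆ e) (hcard : e.card = h)
    (himcard : (e.image Prod.fst).card = h) :
    ∃ j g, j ∉ A.image Prod.fst ∧ e = insert ((j, g) : TVert h k) A := by
  have hsd : (e \ A).card = 1 := by
    rw [Finset.card_sdiff_of_subset hsub, hcard, hA]; omega
  obtain ⟨v, hv⟩ := Finset.card_eq_one.mp hsd
  have hvm : v ∈ e \ A := hv ▸ Finset.mem_singleton_self v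
  have hve : v ∈ e := (Finset.mem_sdiff.mp hvm).1
  have hvA : v ∉ A := (Finset.mem_sdiff.mp hvm).2
  have he : e = insert v A := by
    rw [Finset.insert_eq, ← hv, Finset.sdiff_union_of_subset hsub]
  have hinj : Set.InjOn (Prod.fst : TVert h k → Fin k) ↑e :=
    Finset.card_image_iff.mp (by rw [himcard, hcard])
  have hj : v.1 ∉ A.image Prod.fst := by
    intro hm
    obtain ⟨a, haA, ha1⟩ := Finset.mem_image.mp hm
    exact hvA (hinj (hsub haA) hve ha1 ▸ haA)
  exact ⟨v.1, v.2, hj, by simpa using he⟩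

lemma tv_count (hh : 2 ≤ h) (hk : h < k) (A : Finset (TVert h k)) (hA : A.card = h - 1)
    (hAparts : Set.InjOn (Prod.fst : TVert h k → Fin k) ↑A)
    (E : Finset (Finset (TVert h k)))
    (g : Fin k → ({S : Finset (Fin k) // S.card = h} → ZMod h))
    (hmemE : ∀ e ∈ E, e.card = h ∧ (e.image Prod.fst).card = h)
    (hiff : ∀ j ∉ A.image Prod.fst,
      ∀ g' : {S : Finset (Fin k) // S.card = h} → ZMod h,
      insert ((j, g') : TVert h k) A ∈ E ↔ g' = g j) :
    (E.filter (fun e => A ⊆ e)).card = k - h + 1 := by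
  have hset : E.filter (fun e => A ⊆ e) =
      ((A.image Prod.fst)ᶜ).image (fun j => insert ((j, g j) : TVert h k) A) := by
    ext e
    constructor
    · intro hme
      obtain ⟨heE, hsub⟩ := Finset.mem_filter.mp hme
      obtain ⟨hc, hic⟩ := hmemE e heE
      obtain ⟨j, g', hj, rfl⟩ := tv_decomp hh A hA hAparts e hsub hc hic
      exact Finset.mem_image.mpr ⟨j, Finset.mem_compl.mpr hj,
        by rw [(hiff j hj g').mp heE]⟩
    · intro hme
      obtain ⟨j, hj, rfl⟩ := Finset.mem_image.mp hme
      exact Finset.mem_filter.mpr ⟨(hiff j (Finset.mem_compl.mp hj) (g j)).mpr rfl,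
        Finset.subset_insert _ _⟩
  rw [hset, Finset.card_image_of_injOn]
  · rw [Finset.card_compl, Finset.card_image_of_injOn hAparts, hA]
    simp only [Fintype.card_fin]
    omega
  · intro j1 hj1 j2 hj2 heq
    have hj1' : j1 ∉ A.image Prod.fst := Finset.mem_compl.mp (by simpa using hj1)
    have heq' : insert ((j1, g j1) : TVert h k) A = insert ((j2, g j2) : TVert h k) A := heq
    have : ((j1, g j1) : TVert h k) ∈ insert ((j2, g j2) : TVert h k) A :=
      heq' ▸ Finset.mem_insert_self _ _
    rcases Finset.mem_insert.mp this with h' | h'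
    · exact congrArg Prod.fst h'
    · exact absurd (Finset.mem_image_of_mem _ h') hj1'

end Aux

theorem template_regularity (h k : ℕ) [NeZero h] (hh : 2 ≤ h) (hk : h < k)
    (A : Finset (TVert h k)) (hA : A.card = h - 1)
    (hAparts : Set.InjOn (Prod.fst : TVert h k → Fin k) ↑A) :
    (∀ j : Fin k, j ∉ A.image Prod.fst →
      ((∃! g : {S : Finset (Fin k) // S.card = h} → ZMod h,
          insert ((j, g) : TVert h k) A ∈ posEdges h k) ∧
       (∃! g : {S : Finset (Fin k) // S.card = h} → ZMod h,
          insert ((j, g) : TVert h k) A ∈ negEdges h k))) ∧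
    ((posEdges h k).filter (fun e => A ⊆ e)).card = k - h + 1 ∧
    ((negEdges h k).filter (fun e => A ⊆ e)).card = k - h + 1 := by
  refine ⟨fun j hj => ⟨?_, ?_⟩, ?_, ?_⟩
  · exact ⟨-∑ w ∈ A, w.2, (tv_mem_pos hh A hA hAparts j hj _).mpr rfl,
      fun g' hg' => (tv_mem_pos hh A hA hAparts j hj g').mp hg'⟩
  · exact ⟨_, (tv_mem_neg hh A hA hAparts j hj _).mpr rfl,
      fun g' hg' => (tv_mem_neg hh A hA hAparts j hj g').mp hg'⟩
  · refine tv_count hh hk A hA hAparts _ (fun _ => -∑ w ∈ A, w.2) ?_ ?_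
    · intro e he
      simp only [posEdges, Finset.mem_filter] at he
      exact ⟨he.2.1, he.2.2.1⟩
    · intro j hj g'
      exact tv_mem_pos hh A hA hAparts j hj g'
  · refine tv_count hh hk A hA hAparts _
      (fun j => (fun T : {S : Finset (Fin k) // S.card = h} =>
        if T.1 = insert j (A.image Prod.fst) then (1 : ZMod h) else 0) - ∑ w ∈ A, w.2) ?_ ?_
    · intro e he
      simp only [negEdges, Finset.mem_filter] at he
      exact ⟨he.2.1, he.2.2.1⟩
    · intro j hj g'
      exact tv_mem_neg hh A hA hAparts j hj g'
end

section
/- Under the setting of the previous statement with β > 0 and λ = Ω(n): for n sufficiently large (relative to k, α, β), every weight-k assignment a maximizing Φ(a) is k-partite, i.e., |S ∩ V_i| = 1 for all i. Precisely: if a is k-partite with support S and a' is weight-k but not k-partite with support S', then Φ(a) - Φ(a') ≥ α(m(S) - m(S')) + βλ(C(k,2) - ∑_{{i,j}} k_i'k_j'), and the second summand is at least βλ > binom(k,3)·|α| for large n, hence Φ(a) > Φ(a'). -/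
open Finset

attribute [local instance 10] Classical.propDecidable
set_option linter.unusedSectionVars false
set_option maxHeartbeats 1000000

/-- The total value of the constraints `f_sym(u,v,w) = α·uvw + β(uv+uw+vw) + γ(u+v+w) + δ`,
one per hyperedge of `E`, under the 0/1-assignment with support `S`. -/
def cspVal {V : Type*} [DecidableEq V] (E : Finset (Finset V)) (α β γ δ : ℝ)
    (S : Finset V) : ℝ :=
  ∑ e ∈ E,
    (α * ∏ v ∈ e, (if v ∈ S then (1 : ℝ) else 0) +
     β * ∑ p ∈ e.powersetCard 2, ∏ v ∈ p, (if v ∈ S then (1 : ℝ) else 0) +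
     γ * ∑ v ∈ e, (if v ∈ S then (1 : ℝ) else 0) +
     δ)

section Aux

variable {V : Type*} [Fintype V] [DecidableEq V]

lemma prod_ind (e S : Finset V) :
    (∏ v ∈ e, (if v ∈ S then (1:ℝ) else 0)) = if e ⊆ S then 1 else 0 := by
  by_cases h : e ⊆ S
  · rw [if_pos h]
    exact Finset.prod_eq_one (fun v hv => by simp [h hv])
  · rw [if_neg h]
    obtain ⟨v, hv, hvS⟩ := Finset.not_subset.mp h
    exact Finset.prod_eq_zero hv (by simp [hvS])

lemma count_const {β : Type*} [DecidableEq β] (s : Finset β) (p : β → Prop)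
    [DecidablePred p] (c : ℝ) :
    ∑ x ∈ s, (if p x then c else 0) = c * ((s.filter p).card : ℝ) := by
  rw [← Finset.sum_filter, Finset.sum_const, nsmul_eq_mul, mul_comm]

lemma cspVal_eq (k lam d : ℕ) (α β γ δ : ℝ) (part : V → Fin k)
    (E : Finset (Finset V)) (hE : ∀ e ∈ E, e.card = 3 ∧ Set.InjOn part ↑e)
    (hreg : ∀ A : Finset V, A.card = 2 → Set.InjOn part ↑A →
      (E.filter (fun e => A ⊆ e)).card = lam)
    (hdeg : ∀ v : V, (E.filter (fun e => v ∈ e)).card = d)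
    (S : Finset V) :
    cspVal E α β γ δ S = α * ((E.filter (fun e => e ⊆ S)).card : ℝ)
      + β * (lam : ℝ) *
        (((S.powersetCard 2).filter (fun p : Finset V => Set.InjOn part ↑p)).card : ℝ)
      + γ * ((S.card : ℝ) * (d : ℝ)) + δ * (E.card : ℝ) := by
  unfold cspVal
  rw [Finset.sum_add_distrib, Finset.sum_add_distrib, Finset.sum_add_distrib]
  congr 1; congr 1; congr 1
  -- alpha term
  · rw [← Finset.mul_sum]
    congr 1
    rw [show (∑ e ∈ E, ∏ v ∈ e, (if v ∈ S then (1:ℝ) else 0))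
        = ∑ e ∈ E, (if e ⊆ S then (1:ℝ) else 0) from
      Finset.sum_congr rfl fun e _ => prod_ind e S, count_const]
    rw [one_mul]
  -- beta term
  · rw [← Finset.mul_sum, mul_assoc]
    congr 1
    calc ∑ e ∈ E, (∑ p ∈ e.powersetCard 2, ∏ v ∈ p, (if v ∈ S then (1:ℝ) else 0))
        = ∑ e ∈ E, ∑ p ∈ (univ : Finset V).powersetCard 2,
            if p ⊆ e then (if p ⊆ S then (1:ℝ) else 0) else 0 := by
          refine Finset.sum_congr rfl fun e _ => ?_
          rw [← Finset.sum_filter]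
          apply Finset.sum_congr
          · ext p
            simp [Finset.mem_powersetCard, and_comm]
          · intro p hp
            rw [prod_ind]
      _ = ∑ p ∈ (univ : Finset V).powersetCard 2,
            (if p ⊆ S then (1:ℝ) else 0) * ((E.filter (fun e => p ⊆ e)).card : ℝ) := by
          rw [Finset.sum_comm]
          exact Finset.sum_congr rfl fun p _ => count_const E _ _
      _ = ∑ p ∈ S.powersetCard 2, ((E.filter (fun e => p ⊆ e)).card : ℝ) := by
          rw [show (∑ p ∈ (univ : Finset V).powersetCard 2,
              (if p ⊆ S then (1:ℝ) else 0) * ((E.filter (fun e => p ⊆ e)).card : ℝ))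
              = ∑ p ∈ (univ : Finset V).powersetCard 2,
              (if p ⊆ S then ((E.filter (fun e => p ⊆ e)).card : ℝ) else 0) from
            Finset.sum_congr rfl fun p _ => by by_cases h : p ⊆ S <;> simp [h]]
          rw [← Finset.sum_filter]
          apply Finset.sum_congr _ (fun _ _ => rfl)
          ext p
          simp only [Finset.mem_filter, Finset.mem_powersetCard, Finset.subset_univ, true_and]
          tauto
      _ = ∑ p ∈ S.powersetCard 2,
            (if Set.InjOn part ↑p then (lam : ℝ) else 0) := by
          refine Finset.sum_congr rfl fun p hp => ?_
          rw [Finset.mem_powersetCard] at hp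
          by_cases h : Set.InjOn part ↑p
          · rw [if_pos h, hreg p hp.2 h]
          · rw [if_neg h]
            norm_cast
            rw [Finset.card_eq_zero, Finset.filter_eq_empty_iff]
            intro e he hpe
            exact h (Set.InjOn.mono (by exact_mod_cast hpe) (hE e he).2)
      _ = (lam : ℝ) *
            (((S.powersetCard 2).filter (fun p : Finset V => Set.InjOn part ↑p)).card : ℝ) :=
          count_const _ _ _
  -- gamma term
  · rw [← Finset.mul_sum]
    congr 1
    calc ∑ e ∈ E, ∑ v ∈ e, (if v ∈ S then (1:ℝ) else 0)
        = ∑ e ∈ E, ∑ v ∈ (univ : Finset V), if v ∈ e then (if v ∈ S then (1:ℝ) else 0) else 0 := by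
          refine Finset.sum_congr rfl fun e _ => ?_
          symm
          rw [Finset.sum_ite_mem, Finset.univ_inter]
      _ = ∑ v ∈ (univ : Finset V), (if v ∈ S then (1:ℝ) else 0) * ((E.filter (fun e => v ∈ e)).card : ℝ) := by
          rw [Finset.sum_comm]
          exact Finset.sum_congr rfl fun v _ => count_const E _ _
      _ = ∑ v ∈ S, (d : ℝ) := by
          rw [show (∑ v ∈ (univ : Finset V), (if v ∈ S then (1:ℝ) else 0) * ((E.filter (fun e => v ∈ e)).card : ℝ))
              = ∑ v ∈ (univ : Finset V), (if v ∈ S then ((E.filter (fun e => v ∈ e)).card : ℝ) else 0) from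
            Finset.sum_congr rfl fun v _ => by by_cases h : v ∈ S <;> simp [h]]
          rw [Finset.sum_ite_mem, Finset.univ_inter]
          exact Finset.sum_congr rfl fun v _ => by rw [hdeg v]
      _ = (S.card : ℝ) * (d : ℝ) := by rw [Finset.sum_const, nsmul_eq_mul]
  -- delta
  · rw [Finset.sum_const, nsmul_eq_mul, mul_comm]

lemma pair_count (k : ℕ) (part : V → Fin k) (S : Finset V) :
    ((S.powersetCard 2).filter (fun p : Finset V => Set.InjOn part ↑p)).card
      = ∑ i : Fin k, ∑ j ∈ (univ : Finset (Fin k)).filter (fun j => i < j),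
          (S.filter (fun v => part v = i)).card * (S.filter (fun v => part v = j)).card := by
  set T : Finset (V × V) := (S ×ˢ S).filter (fun q => part q.1 < part q.2) with hT
  have hTcard : T.card
      = ((S.powersetCard 2).filter (fun p : Finset V => Set.InjOn part ↑p)).card := by
    apply Finset.card_bij (fun q _ => ({q.1, q.2} : Finset V))
    · intro q hq
      rw [hT, Finset.mem_filter, Finset.mem_product] at hq
      obtain ⟨⟨h1, h2⟩, hlt⟩ := hq
      have hne : q.1 ≠ q.2 := fun h => absurd hlt (by rw [h]; exact lt_irrefl _)
      rw [Finset.mem_filter, Finset.mem_powersetCard]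
      refine ⟨⟨?_, ?_⟩, ?_⟩
      · intro v hv
        rcases Finset.mem_insert.mp hv with h | h
        · exact h ▸ h1
        · exact (Finset.mem_singleton.mp h) ▸ h2
      · rw [Finset.card_insert_of_notMem (by simpa using hne), Finset.card_singleton]
      · intro a ha b hb hab
        simp only [Finset.coe_insert, Finset.coe_singleton, Set.mem_insert_iff,
          Set.mem_singleton_iff] at ha hb
        rcases ha with rfl | rfl <;> rcases hb with rfl | rfl
        · rfl
        · exact absurd hab (ne_of_lt hlt)
        · exact absurd hab.symm (ne_of_lt hlt)
        · rfl
    · intro q hq q' hq' h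
      rw [hT, Finset.mem_filter] at hq hq'
      have hlt := hq.2
      have hlt' := hq'.2
      have h1 : q.1 ∈ ({q'.1, q'.2} : Finset V) := by rw [← h]; simp
      have h2 : q.2 ∈ ({q'.1, q'.2} : Finset V) := by rw [← h]; simp
      rcases Finset.mem_insert.mp h1 with e1 | e1
      · rcases Finset.mem_insert.mp h2 with e2 | e2
        · exact absurd (e1 ▸ e2 ▸ hlt) (lt_irrefl _)
        · exact Prod.ext e1 (Finset.mem_singleton.mp e2)
      · rw [Finset.mem_singleton] at e1
        rcases Finset.mem_insert.mp h2 with e2 | e2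
        · exact absurd (e1 ▸ e2 ▸ hlt) (by intro hc; exact absurd (hc.trans hlt') (lt_irrefl _))
        · rw [Finset.mem_singleton] at e2
          exact absurd (e1 ▸ e2 ▸ hlt) (lt_irrefl _)
    · intro p hp
      rw [Finset.mem_filter, Finset.mem_powersetCard] at hp
      obtain ⟨⟨hsub, hcard⟩, hinj⟩ := hp
      obtain ⟨u, v, huv, rfl⟩ := Finset.card_eq_two.mp hcard
      have hu : u ∈ S := hsub (by simp)
      have hv : v ∈ S := hsub (by simp)
      have hpn : part u ≠ part v := by
        intro h
        exact huv (hinj (by simp) (by simp) h)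
      rcases lt_or_gt_of_ne hpn with hlt | hgt
      · exact ⟨(u, v), by rw [hT, Finset.mem_filter, Finset.mem_product]; exact ⟨⟨hu, hv⟩, hlt⟩, rfl⟩
      · exact ⟨(v, u), by rw [hT, Finset.mem_filter, Finset.mem_product]; exact ⟨⟨hv, hu⟩, hgt⟩,
          Finset.pair_comm v u⟩
  rw [← hTcard]
  have hmaps : ∀ q ∈ T, (part q.1, part q.2) ∈
      ((univ : Finset (Fin k)) ×ˢ univ).filter (fun r => r.1 < r.2) := by
    intro q hq
    rw [hT, Finset.mem_filter] at hq
    simp [hq.2]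
  rw [Finset.card_eq_sum_card_fiberwise hmaps]
  rw [Finset.sum_filter, Finset.sum_product]
  refine Finset.sum_congr rfl fun i _ => ?_
  rw [Finset.sum_filter]
  refine Finset.sum_congr rfl fun j _ => ?_
  by_cases hij : i < j
  · rw [if_pos hij, if_pos hij]
    have : T.filter (fun q => (part q.1, part q.2) = (i, j))
        = (S.filter (fun v => part v = i)) ×ˢ (S.filter (fun v => part v = j)) := by
      ext q
      rw [hT]
      simp only [Finset.mem_filter, Finset.mem_product, Prod.mk.injEq]
      constructor
      · rintro ⟨⟨⟨h1, h2⟩, _⟩, h3, h4⟩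
        exact ⟨⟨h1, h3⟩, h2, h4⟩
      · rintro ⟨⟨h1, h3⟩, h2, h4⟩
        exact ⟨⟨⟨h1, h2⟩, by rw [h3, h4]; exact hij⟩, h3, h4⟩
    rw [this, Finset.card_product]
  · rw [if_neg hij, if_neg hij]

end Aux

theorem k_partite_assignments_optimal {V : Type*} [Fintype V] [DecidableEq V]
    (k n lam d : ℕ) (α β γ δ : ℝ) (part : V → Fin k)
    (hparts : ∀ i : Fin k,
      ((Finset.univ : Finset V).filter (fun v => part v = i)).card = n)
    (E : Finset (Finset V)) (hE : ∀ e ∈ E, e.card = 3 ∧ Set.InjOn part ↑e)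
    (hreg : ∀ A : Finset V, A.card = 2 → Set.InjOn part ↑A →
      (E.filter (fun e => A ⊆ e)).card = lam)
    (hdeg : ∀ v : V, (E.filter (fun e => v ∈ e)).card = d)
    (hβ : 0 < β)
    -- largeness of n: βλ exceeds C(k,3)·|α| (recall λ = Ω(n))
    (hlarge : (Nat.choose k 3 : ℝ) * |α| < β * (lam : ℝ))
    -- S is the support of a k-partite assignment
    (S : Finset V) (hS : S.card = k)
    (hSpart : ∀ i : Fin k, (S.filter (fun v => part v = i)).card = 1)
    -- S' is the support of a weight-k assignment that is not k-partite
    (S' : Finset V) (hS' : S'.card = k)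
    (hS'npart : ¬ ∀ i : Fin k, (S'.filter (fun v => part v = i)).card = 1) :
    (cspVal E α β γ δ S - cspVal E α β γ δ S' ≥
      α * (((E.filter (fun e => e ⊆ S)).card : ℝ) -
            ((E.filter (fun e => e ⊆ S')).card : ℝ)) +
      β * (lam : ℝ) * ((Nat.choose k 2 : ℝ) -
        ∑ i : Fin k, ∑ j ∈ Finset.univ.filter (fun j => i < j),
          ((S'.filter (fun v => part v = i)).card : ℝ) *
            ((S'.filter (fun v => part v = j)).card : ℝ))) ∧
    (β * (lam : ℝ) * ((Nat.choose k 2 : ℝ) -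
        ∑ i : Fin k, ∑ j ∈ Finset.univ.filter (fun j => i < j),
          ((S'.filter (fun v => part v = i)).card : ℝ) *
            ((S'.filter (fun v => part v = j)).card : ℝ)) ≥ β * (lam : ℝ)) ∧
    cspVal E α β γ δ S > cspVal E α β γ δ S' := by
  set NS : ℕ := ((S.powersetCard 2).filter (fun p : Finset V => Set.InjOn part ↑p)).card with hNS
  set N' : ℕ := ((S'.powersetCard 2).filter (fun p : Finset V => Set.InjOn part ↑p)).card with hN'
  set m : ℕ := (E.filter (fun e => e ⊆ S)).card with hm0
  set m' : ℕ := (E.filter (fun e => e ⊆ S')).card with hm0'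
  -- NS = choose k 2
  have hNSeq : NS = Nat.choose k 2 := by
    rw [hNS, Finset.filter_eq_self.mpr, Finset.card_powersetCard, hS]
    intro p hp
    rw [Finset.mem_powersetCard] at hp
    intro a ha b hb hab
    have h1 : a ∈ S.filter (fun v => part v = part a) := by
      rw [Finset.mem_filter]; exact ⟨hp.1 ha, rfl⟩
    have h2 : b ∈ S.filter (fun v => part v = part a) := by
      rw [Finset.mem_filter]; exact ⟨hp.1 hb, hab.symm⟩
    exact Finset.card_le_one.mp (le_of_eq (hSpart (part a))) a h1 b h2
  -- the real double sum equals N'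
  have hQ : (∑ i : Fin k, ∑ j ∈ Finset.univ.filter (fun j => i < j),
      ((S'.filter (fun v => part v = i)).card : ℝ) *
        ((S'.filter (fun v => part v = j)).card : ℝ)) = (N' : ℝ) := by
    rw [hN', pair_count k part S']
    push_cast
    rfl
  -- S' has a big class
  have hsum' : ∑ i : Fin k, (S'.filter (fun v => part v = i)).card = k := by
    rw [← Finset.card_eq_sum_card_fiberwise (fun v (_ : v ∈ S') => Finset.mem_univ (part v))]
    exact hS'
  have hbig : ∃ i : Fin k, 2 ≤ (S'.filter (fun v => part v = i)).card := by
    by_contra h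
    push_neg at h
    apply hS'npart
    intro i
    by_contra hi
    have hlt : ∑ i : Fin k, (S'.filter (fun v => part v = i)).card
        < ∑ _i : Fin k, 1 :=
      Finset.sum_lt_sum (fun j _ => Nat.lt_succ_iff.mp (h j))
        ⟨i, Finset.mem_univ i, lt_of_le_of_ne (Nat.lt_succ_iff.mp (h i)) hi⟩
    simp only [Finset.sum_const, Finset.card_univ, Fintype.card_fin, smul_eq_mul, mul_one] at hlt
    omega
  -- N' < choose k 2
  have hN'lt : N' < Nat.choose k 2 := by
    obtain ⟨i0, hi0⟩ := hbig
    obtain ⟨u, v, hu, hv, huv⟩ := Finset.one_lt_card_iff.mp hi0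
    rw [Finset.mem_filter] at hu hv
    have hmem : ({u, v} : Finset V) ∈ S'.powersetCard 2 := by
      rw [Finset.mem_powersetCard]
      constructor
      · intro x hx
        rcases Finset.mem_insert.mp hx with rfl | hx
        · exact hu.1
        · exact (Finset.mem_singleton.mp hx) ▸ hv.1
      · rw [Finset.card_insert_of_notMem (by simpa using huv), Finset.card_singleton]
    have hninj : ¬ Set.InjOn part (↑({u, v} : Finset V)) := by
      intro h
      exact huv (h (by simp) (by simp) (hu.2.trans hv.2.symm))
    calc N' < (S'.powersetCard 2).card :=
          Finset.card_lt_card (Finset.filter_ssubset.mpr ⟨{u, v}, hmem, hninj⟩)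
      _ = Nat.choose k 2 := by rw [Finset.card_powersetCard, hS']
  -- m(S), m(S') ≤ choose k 3
  have hmle : ∀ T : Finset V, T.card = k →
      (E.filter (fun e => e ⊆ T)).card ≤ Nat.choose k 3 := by
    intro T hT
    calc (E.filter (fun e => e ⊆ T)).card ≤ (T.powersetCard 3).card := by
          apply Finset.card_le_card
          intro e he
          rw [Finset.mem_filter] at he
          rw [Finset.mem_powersetCard]
          exact ⟨he.2, (hE e he.1).1⟩
      _ = Nat.choose k 3 := by rw [Finset.card_powersetCard, hT]
  -- value difference
  have hdiff : cspVal E α β γ δ S - cspVal E α β γ δ S'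
      = α * ((m : ℝ) - (m' : ℝ)) + β * (lam : ℝ) * ((NS : ℝ) - (N' : ℝ)) := by
    rw [cspVal_eq k lam d α β γ δ part E hE hreg hdeg S,
        cspVal_eq k lam d α β γ δ part E hE hreg hdeg S', hS, hS', ← hNS, ← hN', ← hm0, ← hm0']
    ring
  have hgap : (1 : ℝ) ≤ (NS : ℝ) - (N' : ℝ) := by
    rw [hNSeq]
    have : N' + 1 ≤ Nat.choose k 2 := hN'lt
    have := (Nat.cast_le (α := ℝ)).mpr this
    push_cast at this
    linarith
  have hblam : (0 : ℝ) < β * (lam : ℝ) := by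
    have : (0 : ℝ) ≤ (Nat.choose k 3 : ℝ) * |α| := by positivity
    linarith
  have hgapmul : β * (lam : ℝ) ≤ β * (lam : ℝ) * ((NS : ℝ) - (N' : ℝ)) := by
    nlinarith
  have key : cspVal E α β γ δ S - cspVal E α β γ δ S'
      = α * ((m : ℝ) - (m' : ℝ)) + β * (lam : ℝ) *
        ((Nat.choose k 2 : ℝ) -
          ∑ i : Fin k, ∑ j ∈ Finset.univ.filter (fun j => i < j),
            ((S'.filter (fun v => part v = i)).card : ℝ) *
              ((S'.filter (fun v => part v = j)).card : ℝ)) := by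
    rw [hdiff, hQ, ← hNSeq]
  refine ⟨le_of_eq key.symm, ?_, ?_⟩
  · rw [hQ, ← hNSeq]
    push_cast
    exact hgapmul
  · have hx : |(m : ℝ) - (m' : ℝ)| ≤ (Nat.choose k 3 : ℝ) := by
      rw [abs_le]
      have h1 : (m : ℝ) ≤ (Nat.choose k 3 : ℝ) := by exact_mod_cast hmle S hS
      have h2 : (m' : ℝ) ≤ (Nat.choose k 3 : ℝ) := by exact_mod_cast hmle S' hS'
      have h3 : (0 : ℝ) ≤ (m : ℝ) := Nat.cast_nonneg m
      have h4 : (0 : ℝ) ≤ (m' : ℝ) := Nat.cast_nonneg m'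
      constructor <;> linarith
    have hA : -((Nat.choose k 3 : ℝ) * |α|) ≤ α * ((m : ℝ) - (m' : ℝ)) := by
      have h1 : |α * ((m : ℝ) - (m' : ℝ))| ≤ |α| * (Nat.choose k 3 : ℝ) := by
        rw [abs_mul]
        exact mul_le_mul_of_nonneg_left hx (abs_nonneg α)
      have h2 := neg_abs_le (α * ((m : ℝ) - (m' : ℝ)))
      linarith
    have : 0 < cspVal E α β γ δ S - cspVal E α β γ δ S' := by
      rw [hdiff]
      linarith
    linarith
end
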